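/- Let (Ω, μ) be a measure space admitting a countable measurable partition {Ωₙ}ₙ∈ℕ of Ω (pairwise disjoint measurable sets with ⋃ₙ Ωₙ = Ω) with 0 < μ(Ωₙ) < ∞ for every n, and let H be a Hilbert space over 𝕜 with a Hilbert (orthonormal) basis (eₙ)ₙ∈ℕ. Then there exists a map F : Ω → H (namely F ω = (1/√μ(Ωₙ))·eₙ for ω ∈ Ωₙ) such that for every u ∈ H the function ω ↦ ⟪F ω, u⟫ is measurable and ∫_Ω |⟪F ω, u⟫|² dμ(ω) = ‖u‖²; that is, F is a Parseval continuous frame for H. -/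

import Mathlib

/-!
On `s n` the frame takes the constant value `μ(s n)^(-1/2) • b n`, so `‖⟪F ω, u⟫‖²` is constant
on each piece and its integral over `s n` is `‖⟪b n, u⟫‖²`; summing over the pieces turns the
integral into the Parseval sum of the Hilbert basis.
-/

open MeasureTheory

open scoped ENNReal

namespace Set

variable {Ω ι : Type*} (s : ι → Set Ω) (hcover : ⋃ i, s i = univ)

noncomputable def partitionIndex (ω : Ω) : ι :=
  (mem_iUnion.mp (hcover ▸ mem_univ ω)).choose

theorem mem_partitionIndex (ω : Ω) : ω ∈ s (partitionIndex s hcover ω) :=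
  (mem_iUnion.mp (hcover ▸ mem_univ ω)).choose_spec

variable {s hcover}

theorem partitionIndex_eq_of_mem (hdisj : Pairwise (Function.onFun Disjoint s)) {ω : Ω} {i : ι}
    (hω : ω ∈ s i) : partitionIndex s hcover ω = i := by
  by_contra h
  exact (hdisj h).le_bot ⟨mem_partitionIndex s hcover ω, hω⟩

theorem preimage_partitionIndex_singleton (hdisj : Pairwise (Function.onFun Disjoint s)) (i : ι) :
    partitionIndex s hcover ⁻¹' {i} = s i := by
  ext ω
  constructor
  · rintro rfl
    exact mem_partitionIndex s hcover ω
  · exact partitionIndex_eq_of_mem hdisj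

end Set

open Set

section

variable {Ω ι : Type*} [MeasurableSpace Ω] [Countable ι] {μ : Measure Ω} {s : ι → Set Ω}
  {hcover : ⋃ i, s i = univ}

theorem measurable_partitionIndex [MeasurableSpace ι] (hmeas : ∀ i, MeasurableSet (s i))
    (hdisj : Pairwise (Function.onFun Disjoint s)) : Measurable (partitionIndex s hcover) :=
  measurable_to_countable' fun i => preimage_partitionIndex_singleton hdisj i ▸ hmeas i

theorem lintegral_comp_partitionIndex (hmeas : ∀ i, MeasurableSet (s i))
    (hdisj : Pairwise (Function.onFun Disjoint s)) (g : ι → ℝ≥0∞) :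
    ∫⁻ ω, g (partitionIndex s hcover ω) ∂μ = ∑' i, μ (s i) * g i := by
  rw [← setLIntegral_univ, ← hcover, lintegral_iUnion hmeas hdisj]
  congr 1 with i
  rw [setLIntegral_congr_fun (hmeas i) fun ω hω => by rw [partitionIndex_eq_of_mem hdisj hω],
    setLIntegral_const, mul_comm]

theorem integral_comp_partitionIndex_of_hasSum [MeasurableSpace ι] [MeasurableSingletonClass ι]
    (hmeas : ∀ i, MeasurableSet (s i)) (hdisj : Pairwise (Function.onFun Disjoint s))
    (hfin : ∀ i, μ (s i) < ⊤) {g : ι → ℝ} (hg : ∀ i, 0 ≤ g i) {a : ℝ}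
    (hsum : HasSum (fun i => μ.real (s i) * g i) a) :
    ∫ ω, g (partitionIndex s hcover ω) ∂μ = a := by
  have hmeas_g : Measurable fun ω => g (partitionIndex s hcover ω) :=
    (measurable_of_countable g).comp (measurable_partitionIndex hmeas hdisj)
  rw [integral_eq_lintegral_of_nonneg_ae (.of_forall fun _ => hg _) hmeas_g.aestronglyMeasurable,
    lintegral_comp_partitionIndex (g := fun i => ENNReal.ofReal (g i)) hmeas hdisj]
  have hterm : ∀ i, μ (s i) * ENNReal.ofReal (g i) = ENNReal.ofReal (μ.real (s i) * g i) := by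
    intro i
    rw [ENNReal.ofReal_mul measureReal_nonneg, ofReal_measureReal (hfin i).ne]
  simp only [hterm]
  have hterm_nonneg : ∀ i, 0 ≤ μ.real (s i) * g i := fun i => mul_nonneg measureReal_nonneg (hg i)
  rw [← ENNReal.ofReal_tsum_of_nonneg hterm_nonneg hsum.summable, hsum.tsum_eq,
    ENNReal.toReal_ofReal (hsum.nonneg hterm_nonneg)]

end

theorem HilbertBasis.hasSum_sq_norm_inner {ι 𝕜 E : Type*} [RCLike 𝕜] [NormedAddCommGroup E]
    [InnerProductSpace 𝕜 E] (b : HilbertBasis ι 𝕜 E) (u : E) :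
    HasSum (fun i => ‖(inner 𝕜 (b i) u : 𝕜)‖ ^ 2) (‖u‖ ^ 2) := by
  have h := (RCLike.reCLM (K := 𝕜)).hasSum (b.hasSum_inner_mul_inner u u)
  simp only [RCLike.reCLM_apply, inner_mul_symm_re_eq_norm, norm_mul, inner_self_eq_norm_sq] at h
  simpa only [← inner_conj_symm u, RCLike.norm_conj, ← sq] using h

theorem exists_parseval_continuous_frame
    {𝕜 : Type*} [RCLike 𝕜] [MeasurableSpace 𝕜]
    {H : Type*} [NormedAddCommGroup H] [InnerProductSpace 𝕜 H]
    {Ω : Type*} [MeasurableSpace Ω] (μ : Measure Ω)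
    (s : ℕ → Set Ω) (hmeas : ∀ n, MeasurableSet (s n))
    (hdisj : Pairwise (Function.onFun Disjoint s))
    (hcover : (⋃ n, s n) = Set.univ)
    (hpos : ∀ n, 0 < μ (s n)) (hfin : ∀ n, μ (s n) < ⊤)
    (b : HilbertBasis ℕ 𝕜 H) :
    ∃ F : Ω → H,
      (∀ n, ∀ ω ∈ s n, F ω = ((Real.sqrt ((μ (s n)).toReal))⁻¹ : 𝕜) • b n) ∧
      ∀ u : H, Measurable (fun ω => (inner 𝕜 (F ω) u : 𝕜)) ∧
        ∫ ω, ‖(inner 𝕜 (F ω) u : 𝕜)‖ ^ 2 ∂μ = ‖u‖ ^ 2 := by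
  set e : ℕ → H := fun n => ((Real.sqrt (μ.real (s n)))⁻¹ : 𝕜) • b n
  have hnorm : ∀ n u,
      ‖(inner 𝕜 (e n) u : 𝕜)‖ ^ 2 = (μ.real (s n))⁻¹ * ‖(inner 𝕜 (b n) u : 𝕜)‖ ^ 2 := by
    intro n u
    simp only [e, inner_smul_left, norm_mul, mul_pow, RCLike.norm_conj, norm_inv,
      RCLike.norm_ofReal, abs_of_nonneg (Real.sqrt_nonneg _), inv_pow,
      Real.sq_sqrt measureReal_nonneg]
  have hreal_ne : ∀ n, μ.real (s n) ≠ 0 := fun n =>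
    (ENNReal.toReal_pos (hpos n).ne' (hfin n).ne).ne'
  refine ⟨fun ω => e (partitionIndex s hcover ω), fun n ω hω => ?_, fun u => ⟨?_, ?_⟩⟩
  · simp only [partitionIndex_eq_of_mem hdisj hω, e, measureReal_def]
  · exact (measurable_from_nat (f := fun n => (inner 𝕜 (e n) u : 𝕜))).comp
      (measurable_partitionIndex hmeas hdisj)
  · refine integral_comp_partitionIndex_of_hasSum (g := fun n => ‖(inner 𝕜 (e n) u : 𝕜)‖ ^ 2)
      hmeas hdisj hfin (fun n => sq_nonneg _) ?_
    simpa only [hnorm, mul_inv_cancel_left₀ (hreal_ne _)] using b.hasSum_sq_norm_inner u
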